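/- Let G=(V,E) be a graph, T a spanning tree of G with stretch σ (i.e., the tree path T_f has at most σ edges for every f ∈ E∖E(T)). Let (S,J) be a 2-edge-connected subgraph of G whose vertex set S dominates V, and let F ⊆ E∖E(T) be any edge set with |F| ≤ ρ|J∖E(T)| such that T_F is a dominating tree. Then T_F ∪ F is a 2-edge-connected subgraph of G whose vertex set dominates V, and its number of edges satisfies |F| + |E(T_F)| ≤ ρ(σ+1)|J|. -/

import Mathlib

open SimpleGraph
variable {V : Type*}
noncomputable def treeWalk (T : SimpleGraph V) (hT : T.IsTree) (u v : V) : T.Walk u v :=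
  (hT.existsUnique_path u v).choose
noncomputable def pathSupport (T : SimpleGraph V) (hT : T.IsTree) (f : V × V) : Set V :=
  {v | v ∈ (treeWalk T hT f.1 f.2).support}
noncomputable def pathEdges (T : SimpleGraph V) (hT : T.IsTree) (f : V × V) : Set (Sym2 V) :=
  {e | e ∈ (treeWalk T hT f.1 f.2).edges}
noncomputable def unionPaths (T : SimpleGraph V) (hT : T.IsTree) (F : Set (V × V)) : SimpleGraph V :=
  SimpleGraph.fromEdgeSet (⋃ f ∈ F, pathEdges T hT f)
def pairGraph (F : Set (V × V)) : SimpleGraph V :=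
  SimpleGraph.fromEdgeSet {e | ∃ f ∈ F, e = s(f.1, f.2)}
def ConnOn (H : SimpleGraph V) : Prop :=
  H.support.Nonempty ∧ ∀ u ∈ H.support, ∀ v ∈ H.support, H.Reachable u v
def TwoEdgeConnected (H : SimpleGraph V) : Prop :=
  H.support.Nontrivial ∧ (∀ u ∈ H.support, ∀ v ∈ H.support, H.Reachable u v) ∧
    ∀ e ∈ H.edgeSet, ∀ u ∈ H.support, ∀ v ∈ H.support, (H.deleteEdges {e}).Reachable u v

/-!
Every non-tree edge `f = uv` closes the cycle `T_f + f`, so every edge of `T_F ∪ F` lies on a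
cycle and is not a bridge. The endpoints of `f` lie on `T_f`, so `T_F ∪ F` has the same vertex
set as the tree `T_F`; it is therefore connected, hence 2-edge-connected, and dominating.
Finally `|E(T_F)| ≤ ∑_{f ∈ F} |E(T_f)| ≤ σ|F|`, so
`|F| + |E(T_F)| ≤ (σ + 1)|F| ≤ ρ(σ + 1)|J ∖ E(T)| ≤ ρ(σ + 1)|J|`.
-/

namespace SimpleGraph

variable {G H : SimpleGraph V} {u v : V}

lemma support_sup_of_support_subset (h : H.support ⊆ G.support) :
    (G ⊔ H).support = G.support :=
  Set.Subset.antisymm (fun _ ⟨y, hxy⟩ => hxy.elim (fun hG => ⟨y, hG⟩) fun hH => h ⟨y, hH⟩)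
    (support_mono le_sup_left)

lemma Reachable.deleteEdges_of_forall_not_isBridge
    (hG : ∀ a b, G.Adj a b → ¬ G.IsBridge s(a, b)) (huv : G.Reachable u v) (e : Sym2 V) :
    (G.deleteEdges {e}).Reachable u v := by
  obtain ⟨p⟩ := huv
  induction p with
  | nil => rfl
  | @cons a b _ hab _ ih =>
    refine Reachable.trans ?_ ih
    by_cases he : s(a, b) = e
    · exact he ▸ of_not_not (hG a b hab)
    · exact (deleteEdges_adj.mpr ⟨hab, he⟩).reachable

lemma Walk.IsPath.exists_isCycle_cons {p : G.Walk u v} (hp : p.IsPath)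
    (hpH : ∀ e ∈ p.edges, e ∈ H.edgeSet) (hvu : H.Adj v u) (huv : ¬ G.Adj u v) :
    ∃ c : H.Walk v v, c.IsCycle ∧ c.edges = s(v, u) :: p.edges := by
  refine ⟨.cons hvu (p.transfer H hpH), ?_, by simp [Walk.edges_transfer]⟩
  rw [Walk.cons_isCycle_iff, Walk.edges_transfer]
  exact ⟨hp.transfer hpH, fun h => huv (p.adj_of_mem_edges h).symm⟩

end SimpleGraph

lemma ConnOn.mono {U H : SimpleGraph V} (hU : ConnOn U) (hUH : U ≤ H)
    (hsupp : H.support ⊆ U.support) : ConnOn H :=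
  ⟨hU.1.mono (support_mono hUH), fun u hu v hv => (hU.2 u (hsupp hu) v (hsupp hv)).mono hUH⟩

lemma ConnOn.twoEdgeConnected {H : SimpleGraph V} (hH : ConnOn H)
    (hbridge : ∀ a b, H.Adj a b → ¬ H.IsBridge s(a, b)) : TwoEdgeConnected H := by
  obtain ⟨⟨u, w, huw⟩, hconn⟩ := hH
  exact ⟨⟨u, ⟨w, huw⟩, w, huw.right_mem_support, huw.ne⟩, hconn,
    fun e _ u hu v hv => (hconn u hu v hv).deleteEdges_of_forall_not_isBridge hbridge e⟩

lemma pairGraph_adj {F : Set (V × V)} {u v : V} :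
    (pairGraph F).Adj u v ↔ (∃ f ∈ F, s(u, v) = s(f.1, f.2)) ∧ u ≠ v :=
  fromEdgeSet_adj _

lemma pairGraph_le {G : SimpleGraph V} {F : Set (V × V)} (hF : ∀ f ∈ F, G.Adj f.1 f.2) :
    pairGraph F ≤ G :=
  (fromEdgeSet_le G).mpr fun _ ⟨⟨f, hf, hef⟩, _⟩ => hef ▸ hF f hf

section TreePaths

variable {T : SimpleGraph V} (hT : T.IsTree)

lemma treeWalk_isPath (u v : V) : (treeWalk T hT u v).IsPath :=
  (hT.existsUnique_path u v).choose_spec.1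

lemma edgeSet_unionPaths (F : Set (V × V)) :
    (unionPaths T hT F).edgeSet = ⋃ f ∈ F, pathEdges T hT f := by
  refine (edgeSet_fromEdgeSet _).trans (sdiff_eq_left.mpr (Set.disjoint_left.mpr fun e he hdiag => ?_))
  obtain ⟨f, -, hef⟩ := Set.mem_iUnion₂.mp he
  exact T.not_isDiag_of_mem_edgeSet ((treeWalk T hT f.1 f.2).edges_subset_edgeSet hef) hdiag

lemma unionPaths_le (F : Set (V × V)) : unionPaths T hT F ≤ T := by
  rw [← edgeSet_subset_edgeSet, edgeSet_unionPaths]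
  exact Set.iUnion₂_subset fun f _ => (treeWalk T hT f.1 f.2).edges_subset_edgeSet

lemma pathEdges_subset_edgeSet_unionPaths {F : Set (V × V)} {f : V × V} (hf : f ∈ F) :
    pathEdges T hT f ⊆ (unionPaths T hT F).edgeSet := by
  rw [edgeSet_unionPaths]
  exact Set.subset_biUnion_of_mem hf

lemma reachable_unionPaths {F : Set (V × V)} {f : V × V} (hf : f ∈ F) :
    (unionPaths T hT F).Reachable f.1 f.2 :=
  ⟨(treeWalk T hT f.1 f.2).transfer _ (pathEdges_subset_edgeSet_unionPaths hT hf)⟩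

lemma support_pairGraph_subset (F : Set (V × V)) :
    (pairGraph F).support ⊆ (unionPaths T hT F).support := by
  rintro x ⟨y, hxy⟩
  obtain ⟨⟨f, hf, hxyf⟩, hne⟩ := pairGraph_adj.mp hxy
  rcases Sym2.eq_iff.mp hxyf with ⟨rfl, rfl⟩ | ⟨rfl, rfl⟩
  · exact mem_support_of_reachable hne (reachable_unionPaths hT hf)
  · exact mem_support_of_reachable hne (reachable_unionPaths hT hf).symm

lemma not_isBridge_unionPaths_sup_pairGraph {F : Set (V × V)}
    (hF : ∀ f ∈ F, f.1 ≠ f.2 ∧ ¬ T.Adj f.1 f.2) {a b : V}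
    (hab : (unionPaths T hT F ⊔ pairGraph F).Adj a b) :
    ¬ (unionPaths T hT F ⊔ pairGraph F).IsBridge s(a, b) := by
  obtain ⟨f, hf, hmem⟩ : ∃ f ∈ F, s(a, b) ∈ s(f.2, f.1) :: (treeWalk T hT f.1 f.2).edges := by
    rcases hab with hab | hab
    · have hab : s(a, b) ∈ (unionPaths T hT F).edgeSet := hab
      rw [edgeSet_unionPaths] at hab
      obtain ⟨f, hf, hef⟩ := Set.mem_iUnion₂.mp hab
      exact ⟨f, hf, List.mem_cons_of_mem _ hef⟩
    · obtain ⟨⟨f, hf, hef⟩, -⟩ := pairGraph_adj.mp hab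
      exact ⟨f, hf, Sym2.eq_swap (a := f.1) ▸ hef ▸ List.mem_cons_self⟩
  obtain ⟨c, hc, hedges⟩ := (treeWalk_isPath hT f.1 f.2).exists_isCycle_cons
    (fun e he => edgeSet_mono le_sup_left (pathEdges_subset_edgeSet_unionPaths hT hf he))
    (le_sup_right (a := unionPaths T hT F) (pairGraph_adj.mpr ⟨⟨f, hf, rfl⟩, (hF f hf).1⟩)).symm
    (hF f hf).2
  exact fun hbridge => hbridge.notMem_edges_of_isCycle hc (hedges ▸ hmem)

lemma ncard_edgeSet_unionPaths_le (F : Finset (V × V)) :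
    (unionPaths T hT ↑F).edgeSet.ncard ≤ ∑ f ∈ F, (treeWalk T hT f.1 f.2).edges.length := by
  classical
  rw [edgeSet_unionPaths]
  refine (F.set_ncard_biUnion_le _).trans (Finset.sum_le_sum fun f _ => ?_)
  calc (pathEdges T hT f).ncard = (treeWalk T hT f.1 f.2).edges.toFinset.card := by
        rw [← Set.ncard_coe_finset, List.coe_toFinset]; rfl
    _ ≤ (treeWalk T hT f.1 f.2).edges.length := List.toFinset_card_le _

end TreePaths

theorem stmt12_general (G T : SimpleGraph V) [DecidableRel T.Adj]
    (hle : T ≤ G) (hT : T.IsTree) (σ : ℕ)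
    (hstretch : ∀ u v : V, G.Adj u v → ¬ T.Adj u v → (treeWalk T hT u v).edges.length ≤ σ)
    (J : Finset (V × V))
    (ρ : ℝ) (hρ : 0 ≤ ρ)
    (F : Finset (V × V)) (hF : ∀ f ∈ F, G.Adj f.1 f.2 ∧ ¬ T.Adj f.1 f.2)
    (hFcard : (F.card : ℝ) ≤ ρ * (J.filter (fun e => ¬ T.Adj e.1 e.2)).card)
    (htree : ConnOn (unionPaths T hT ↑F))
    (hdomF : ∀ v : V, v ∈ (unionPaths T hT ↑F).support ∨
      ∃ u ∈ (unionPaths T hT ↑F).support, G.Adj v u) :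
    TwoEdgeConnected (unionPaths T hT ↑F ⊔ pairGraph ↑F) ∧
      (unionPaths T hT ↑F ⊔ pairGraph ↑F) ≤ G ∧
      (∀ v : V, v ∈ (unionPaths T hT ↑F ⊔ pairGraph (↑F : Set (V × V))).support ∨
        ∃ u ∈ (unionPaths T hT ↑F ⊔ pairGraph (↑F : Set (V × V))).support, G.Adj v u) ∧
      (F.card : ℝ) + ((unionPaths T hT (↑F : Set (V × V))).edgeSet.ncard : ℝ) ≤
        ρ * (σ + 1) * J.card := by
  have hsupp := support_sup_of_support_subset (support_pairGraph_subset hT (F : Set (V × V)))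
  refine ⟨(htree.mono le_sup_left hsupp.subset).twoEdgeConnected fun a b hab =>
      not_isBridge_unionPaths_sup_pairGraph hT (fun f hf => ⟨(hF f hf).1.ne, (hF f hf).2⟩) hab,
    sup_le ((unionPaths_le hT _).trans hle) (pairGraph_le fun f hf => (hF f hf).1),
    by simpa only [hsupp] using hdomF, ?_⟩
  have hpaths : ((unionPaths T hT ↑F).edgeSet.ncard : ℝ) ≤ σ * F.card := by
    have := (ncard_edgeSet_unionPaths_le hT F).trans
      (Finset.sum_le_card_nsmul F _ σ fun f hf => hstretch f.1 f.2 (hF f hf).1 (hF f hf).2)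
    rw [smul_eq_mul, mul_comm] at this
    exact_mod_cast this
  have hJ : ((J.filter (fun e => ¬ T.Adj e.1 e.2)).card : ℝ) ≤ J.card := by
    exact_mod_cast Finset.card_filter_le _ _
  calc (F.card : ℝ) + (unionPaths T hT ↑F).edgeSet.ncard ≤ (σ + 1) * F.card := by linarith
    _ ≤ (σ + 1) * (ρ * J.card) := by gcongr; exact hFcard.trans (by gcongr)
    _ = ρ * (σ + 1) * J.card := by ring

/-- Combining the reductions: if `T` is a spanning tree of `G` with stretch `σ`,
`(S,J)` is a 2-edge-connected dominating subgraph of `G`, and `F` is a set of non-tree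
edges with `|F| ≤ ρ·|J \ E_T|` such that `T_F` is a dominating tree, then `T_F ∪ F` is a
2-edge-connected subgraph of `G` whose vertex set dominates `V`, with
`|F| + |E(T_F)| ≤ ρ(σ+1)|J|`. -/
theorem stmt12 [Fintype V] [DecidableEq V] (G T : SimpleGraph V) [DecidableRel T.Adj]
    (hle : T ≤ G) (hT : T.IsTree) (σ : ℕ)
    (hstretch : ∀ u v : V, G.Adj u v → ¬ T.Adj u v → (treeWalk T hT u v).edges.length ≤ σ)
    (J : Finset (V × V)) (hJG : ∀ e ∈ J, G.Adj e.1 e.2)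
    (h2ecJ : TwoEdgeConnected (pairGraph (↑J : Set (V × V))))
    (hdomJ : ∀ v : V, v ∈ (pairGraph (↑J : Set (V × V))).support ∨
      ∃ u ∈ (pairGraph (↑J : Set (V × V))).support, G.Adj v u)
    (ρ : ℝ) (hρ : 0 ≤ ρ)
    (F : Finset (V × V)) (hF : ∀ f ∈ F, G.Adj f.1 f.2 ∧ ¬ T.Adj f.1 f.2)
    (hFcard : (F.card : ℝ) ≤ ρ * (J.filter (fun e => ¬ T.Adj e.1 e.2)).card)
    (htree : ConnOn (unionPaths T hT ↑F))
    (hdomF : ∀ v : V, v ∈ (unionPaths T hT ↑F).support ∨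
      ∃ u ∈ (unionPaths T hT ↑F).support, G.Adj v u) :
    TwoEdgeConnected (unionPaths T hT ↑F ⊔ pairGraph ↑F) ∧
      (unionPaths T hT ↑F ⊔ pairGraph ↑F) ≤ G ∧
      (∀ v : V, v ∈ (unionPaths T hT ↑F ⊔ pairGraph (↑F : Set (V × V))).support ∨
        ∃ u ∈ (unionPaths T hT ↑F ⊔ pairGraph (↑F : Set (V × V))).support, G.Adj v u) ∧
      (F.card : ℝ) + ((unionPaths T hT (↑F : Set (V × V))).edgeSet.ncard : ℝ) ≤
        ρ * (σ + 1) * J.card :=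
  stmt12_general G T hle hT σ hstretch J ρ hρ F hF hFcard htree hdomF
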